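/- arXiv:math/0103040 — 3 statements merged into one kernel-verified Lean document; each statement's English description precedes it below -/
import Mathlib

section
/- For nonzero j, k in Z^2 with j + k = l, the coefficient γ^l_{j,k} = (1/2)(j^⊥ · l)(|k| - |j|)/(|j||k|) satisfies |γ^l_{j,k}| ≤ |l|^2 / (2 max(|j|, |k|)). -/
/-- The perpendicular of a lattice vector: `(j1, j2)^⊥ = (-j2, j1)`. -/
def perp (j : ℤ × ℤ) : ℤ × ℤ := (-j.2, j.1)

/-- The standard dot product on `ℤ²`. -/
def dotZ (a b : ℤ × ℤ) : ℤ := a.1 * b.1 + a.2 * b.2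

/-- Euclidean norm of a lattice point in `ℤ²`. -/
noncomputable def en (j : ℤ × ℤ) : ℝ := Real.sqrt ((j.1 : ℝ) ^ 2 + (j.2 : ℝ) ^ 2)

lemma en_nonneg (j : ℤ × ℤ) : 0 ≤ en j := Real.sqrt_nonneg _

lemma en_sq (j : ℤ × ℤ) : en j ^ 2 = (j.1 : ℝ) ^ 2 + (j.2 : ℝ) ^ 2 :=
  Real.sq_sqrt (by positivity)

lemma en_pos {j : ℤ × ℤ} (hj : j ≠ 0) : 0 < en j := by
  have h : j.1 ≠ 0 ∨ j.2 ≠ 0 := by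
    by_contra h; push_neg at h; exact hj (Prod.ext h.1 h.2)
  apply Real.sqrt_pos.mpr
  rcases h with h | h
  · have h1 : (j.1 : ℝ) ≠ 0 := Int.cast_ne_zero.mpr h
    positivity
  · have h1 : (j.2 : ℝ) ≠ 0 := Int.cast_ne_zero.mpr h
    positivity

lemma abs_dot_le (x y : ℤ × ℤ) : |(dotZ x y : ℝ)| ≤ en x * en y := by
  have h1 := en_nonneg x
  have h2 := en_nonneg y
  have hx := en_sq x
  have hy := en_sq y
  have key : |(dotZ x y : ℝ)| ^ 2 ≤ (en x * en y) ^ 2 := by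
    rw [sq_abs]
    have : ((dotZ x y : ℝ)) = (x.1 : ℝ) * y.1 + (x.2 : ℝ) * y.2 := by
      simp [dotZ]
    rw [this, mul_pow, hx, hy]
    nlinarith [sq_nonneg ((x.1 : ℝ) * y.2 - (x.2 : ℝ) * y.1)]
  nlinarith [abs_nonneg ((dotZ x y : ℝ)), mul_nonneg h1 h2]

lemma en_perp (j : ℤ × ℤ) : en (perp j) = en j := by
  simp [en, perp]
  ring_nf

/-- The symmetrized coefficient `γ^l_{j,k} = (1/2)(j^⊥·l)(|k|-|j|)/(|j||k|)`. -/
noncomputable def gam (j k l : ℤ × ℤ) : ℝ :=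
  (1 / 2) * (dotZ (perp j) l : ℝ) * (en k - en j) / (en j * en k)

/-- `|γ^l_{j,k}| ≤ |l|² / (2 max(|j|,|k|))` for nonzero `j, k` with `j + k = l`. -/
theorem gamma_bound (j k l : ℤ × ℤ) (hj : j ≠ 0) (hk : k ≠ 0) (hl : j + k = l) :
    |gam j k l| ≤ en l ^ 2 / (2 * max (en j) (en k)) := by
  subst hl
  set a := en j with ha'
  set b := en k with hb'
  set c := en (j + k) with hc'
  have ha : 0 < a := en_pos hj
  have hb : 0 < b := en_pos hk
  have hc : 0 ≤ c := en_nonneg _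
  set D : ℝ := (dotZ (perp j) (j + k) : ℝ) with hD'
  -- Cauchy-Schwarz bounds
  have hD1 : |D| ≤ a * c := by
    have := abs_dot_le (perp j) (j + k)
    rwa [en_perp] at this
  have hD2 : |D| ≤ b * c := by
    have heq : (dotZ (perp j) (j + k) : ℤ) = -(dotZ (perp k) (j + k)) := by
      simp [dotZ, perp, Prod.fst_add, Prod.snd_add]; ring
    have := abs_dot_le (perp k) (j + k)
    rw [en_perp] at this
    rw [hD', heq]
    push_cast
    rwa [abs_neg]
  -- reverse triangle inequality
  have hdjk : |(dotZ j k : ℝ)| ≤ a * b := abs_dot_le j k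
  have hc2 : c ^ 2 = a ^ 2 + b ^ 2 + 2 * (dotZ j k : ℝ) := by
    rw [hc', ha', hb', en_sq, en_sq, en_sq]
    simp [dotZ, Prod.fst_add, Prod.snd_add]
    push_cast
    ring
  have htri : |b - a| ≤ c := by
    have h1 : |b - a| ^ 2 ≤ c ^ 2 := by
      rw [sq_abs, hc2]
      have := abs_le.mp hdjk
      nlinarith
    nlinarith [abs_nonneg (b - a)]
  -- rewrite gam
  have hgam : |gam j k (j + k)| = (1 / 2) * |D| * |b - a| / (a * b) := by
    rw [gam, abs_div, abs_mul, abs_mul, abs_of_pos (mul_pos ha hb),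
      abs_of_nonneg (by norm_num : (0:ℝ) ≤ 1 / 2)]
  rw [hgam]
  rcases le_total a b with hab | hab
  · rw [max_eq_right hab]
    rw [div_le_div_iff₀ (mul_pos ha hb) (by linarith)]
    have key : |D| * |b - a| ≤ (a * c) * c :=
      mul_le_mul hD1 htri (abs_nonneg _) (mul_nonneg ha.le hc)
    nlinarith [abs_nonneg D, abs_nonneg (b - a)]
  · rw [max_eq_left hab]
    rw [div_le_div_iff₀ (mul_pos ha hb) (by linarith)]
    have key : |D| * |b - a| ≤ (b * c) * c :=
      mul_le_mul hD2 htri (abs_nonneg _) (mul_nonneg hb.le hc)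
    nlinarith [abs_nonneg D, abs_nonneg (b - a)]
end

section
/- Let y : [0,∞) → ℝ be a nonnegative continuous function and z : [0,∞) → ℝ nonnegative continuous, with y(t0) ≤ κ/4 for some κ > 0, and suppose for all t ≥ t0: y(t) + (κ/2)∫_{t0}^t z(s) ds ≤ κ/4 + ∫_{t0}^t y(s) z(s) ds. Then y(t) ≤ κ/2 for all t ≥ t0. -/
open MeasureTheory intervalIntegral

/-- If continuous nonnegative `y, z` on `[t0, ∞)` satisfy `y t0 ≤ κ/4` and the
integral inequality `y(t) + (κ/2)∫_{t0}^t z ≤ κ/4 + ∫_{t0}^t y z` for all `t ≥ t0`,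
then `y(t) ≤ κ/2` for all `t ≥ t0`. -/
theorem integral_inequality_bound (y z : ℝ → ℝ) (t0 κ : ℝ) (hκ : 0 < κ)
    (hy_cont : ContinuousOn y (Set.Ici t0)) (hz_cont : ContinuousOn z (Set.Ici t0))
    (hy_nonneg : ∀ t ∈ Set.Ici t0, 0 ≤ y t) (hz_nonneg : ∀ t ∈ Set.Ici t0, 0 ≤ z t)
    (hy0 : y t0 ≤ κ / 4)
    (hineq : ∀ t, t0 ≤ t →
      y t + (κ / 2) * ∫ s in t0..t, z s ≤ κ / 4 + ∫ s in t0..t, y s * z s) :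
    ∀ t, t0 ≤ t → y t ≤ κ / 2 := by
  -- key: if y ≤ κ/2 on [t0,t], then y t ≤ κ/4
  have key : ∀ t, t0 ≤ t → (∀ s ∈ Set.Icc t0 t, y s ≤ κ / 2) → y t ≤ κ / 4 := by
    intro t ht hb
    have hsub : Set.uIcc t0 t ⊆ Set.Ici t0 := by
      rw [Set.uIcc_of_le ht]; exact Set.Icc_subset_Ici_self
    have hz_int : IntervalIntegrable z volume t0 t :=
      (hz_cont.mono hsub).intervalIntegrable
    have hyz_int : IntervalIntegrable (fun s => y s * z s) volume t0 t :=
      ((hy_cont.mono hsub).mul (hz_cont.mono hsub)).intervalIntegrable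
    have hcz_int : IntervalIntegrable (fun s => (κ / 2) * z s) volume t0 t :=
      hz_int.const_mul _
    have hmono : (∫ s in t0..t, y s * z s) ≤ ∫ s in t0..t, (κ / 2) * z s := by
      apply intervalIntegral.integral_mono_on ht hyz_int hcz_int
      intro s hs
      have hzs : 0 ≤ z s := hz_nonneg s hs.1
      have := hb s hs
      nlinarith
    have hconst : (∫ s in t0..t, (κ / 2) * z s) = (κ / 2) * ∫ s in t0..t, z s :=
      intervalIntegral.integral_const_mul _ _
    have h1 := hineq t ht
    rw [hconst] at hmono
    linarith
  intro t1 ht1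
  by_contra hcon
  push_neg at hcon
  set S : Set ℝ := {t | t ∈ Set.Icc t0 t1 ∧ ∀ s ∈ Set.Icc t0 t, y s ≤ κ / 2} with hS
  have ht0S : t0 ∈ S := by
    refine ⟨⟨le_refl _, ht1⟩, ?_⟩
    intro s hs
    have : s = t0 := le_antisymm hs.2 hs.1
    rw [this]; linarith
  have hbdd : BddAbove S := ⟨t1, fun x hx => hx.1.2⟩
  have hne : S.Nonempty := ⟨t0, ht0S⟩
  set T := sSup S with hT
  have hTmem : t0 ≤ T := le_csSup hbdd ht0S
  have hTle : T ≤ t1 := csSup_le hne (fun x hx => hx.1.2)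
  -- y s ≤ κ/2 for all s ∈ [t0, T)
  have hlt : ∀ s, t0 ≤ s → s < T → y s ≤ κ / 2 := by
    intro s hs hsT
    obtain ⟨u, huS, hsu⟩ := exists_lt_of_lt_csSup hne hsT
    exact huS.2 s ⟨hs, hsu.le⟩
  -- y T ≤ κ/2 by continuity
  have hyT : y T ≤ κ / 2 := by
    rcases eq_or_lt_of_le hTmem with h | h
    · rw [← h]; linarith
    · -- T is the limit of points s < T
      have hcontT : ContinuousWithinAt y (Set.Ici t0) T := hy_cont T hTmem
      have hclosed : T ∈ closure (Set.Ico t0 T) := by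
        rw [closure_Ico (ne_of_lt h)]
        exact ⟨hTmem, le_refl _⟩
      have : ContinuousWithinAt y (Set.Ico t0 T) T :=
        hcontT.mono (fun x hx => hx.1)
      have hlim : Filter.Tendsto y (nhdsWithin T (Set.Ico t0 T)) (nhds (y T)) := this
      have hne' : (nhdsWithin T (Set.Ico t0 T)).NeBot := by
        rw [mem_closure_iff_nhdsWithin_neBot] at hclosed; exact hclosed
      exact le_of_tendsto hlim (Filter.eventually_of_mem self_mem_nhdsWithin
        (fun s hs => hlt s hs.1 hs.2))
  have hball : ∀ s ∈ Set.Icc t0 T, y s ≤ κ / 2 := by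
    intro s hs
    rcases eq_or_lt_of_le hs.2 with h | h
    · rw [h]; exact hyT
    · exact hlt s hs.1 h
  have hyT4 : y T ≤ κ / 4 := key T hTmem hball
  have hTne : T < t1 := by
    rcases eq_or_lt_of_le hTle with h | h
    · exfalso; rw [h] at hyT4; linarith
    · exact h
  -- continuity at T: find δ so that y < κ/2 on [T, T+δ)
  have hcontT : ContinuousWithinAt y (Set.Ici t0) T := hy_cont T hTmem
  have hnhds : ∀ᶠ u in nhdsWithin T (Set.Ici t0), y u < κ / 2 := by
    apply hcontT.eventually_lt continuousWithinAt_const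
    linarith
  rw [eventually_nhdsWithin_iff] at hnhds
  obtain ⟨ε, hε, hεball⟩ := Metric.eventually_nhds_iff.mp hnhds
  set T' := min t1 (T + ε / 2) with hT'
  have hTT' : T < T' := lt_min hTne (by linarith)
  have hT'S : T' ∈ S := by
    refine ⟨⟨le_trans hTmem hTT'.le, min_le_left _ _⟩, ?_⟩
    intro s hs
    rcases le_or_gt s T with h | h
    · exact hball s ⟨hs.1, h⟩
    · apply le_of_lt
      apply hεball (show dist s T < ε by
        rw [Real.dist_eq, abs_of_pos (by linarith)]
        have : s ≤ T + ε / 2 := le_trans hs.2 (min_le_right _ _)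
        linarith) hs.1
  have : T' ≤ T := le_csSup hbdd hT'S
  linarith
end

section
/- Let y, z : [t0, T] → ℝ≥0 be continuous with y(t0) ≤ κ/4, κ > 0, and suppose y is absolutely continuous with y'(t) + z(t)(κ/2 - y(t)) ≤ 0 for a.e. t. Then y(t) ≤ κ/4 for all t ∈ [t0, T]; in particular y is non-increasing on [t0, T]. -/
/-!
Below the threshold `κ / 2` the inequality forces `y' ≤ -z (κ/2 - y) ≤ 0` almost everywhere, so
on any interval `[t0, t]` where `y < κ/2` the function `y` is antitone. If `y` ever reached `κ/2`,
then at the first time `t₁` it does we would get `κ/2 ≤ y t₁ ≤ y t0 ≤ κ/4`; hence `y < κ/2`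
throughout and `y` is antitone on all of `[t0, T]`.

Since `y'` is only known to be nonpositive almost everywhere, passing from the derivative to
monotonicity needs the Goldowski–Tonelli argument: if `f u < f v` with `u < v`, every value in
`(f u, f v)` is attained at a point where `f' ≥ 0` (its last crossing), but the images of
`{f' = 0}` (Sard) and of the null set `{f' > 0}` are null.
-/

open MeasureTheory Set

theorem HasDerivWithinAt.nonneg_of_isMinOn_Icc {f : ℝ → ℝ} {f' a b : ℝ} (hab : a < b)
    (hf : HasDerivWithinAt f f' (Icc a b) a) (hmin : IsMinOn f (Icc a b) a) : 0 ≤ f' := by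
  have hcone : b - a ∈ posTangentConeAt (Icc a b) a :=
    sub_mem_posTangentConeAt_of_segment_subset (segment_eq_Icc hab.le).subset
  have := hmin.localize.hasFDerivWithinAt_nonneg hf hcone
  rw [ContinuousLinearMap.toSpanSingleton_apply, smul_eq_mul] at this
  exact nonneg_of_mul_nonneg_right this (sub_pos.2 hab)

theorem volume_image_eq_zero_of_hasDerivWithinAt_zero {f : ℝ → ℝ} {s : Set ℝ}
    (hf : ∀ x ∈ s, HasDerivWithinAt f 0 s x) : volume (f '' s) = 0 :=
  addHaar_image_eq_zero_of_det_fderivWithin_eq_zero volume hf fun _ _ => by simp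

theorem Ioo_subset_image_setOf_deriv_nonneg {f f' : ℝ → ℝ} {u v : ℝ} (huv : u ≤ v)
    (hcont : ContinuousOn f (Icc u v))
    (hf : ∀ x ∈ Ico u v, HasDerivWithinAt f (f' x) (Icc x v) x) :
    Ioo (f u) (f v) ⊆ f '' {x ∈ Ico u v | 0 ≤ f' x} := by
  intro c hc
  set K := Icc u v ∩ f ⁻¹' {c}
  have hKbdd : BddAbove K := ⟨v, fun x hx => hx.1.2⟩
  obtain ⟨x₀, hx₀, hfx₀⟩ := intermediate_value_Icc huv hcont (Ioo_subset_Icc_self hc)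
  have hwK : sSup K ∈ K :=
    (hcont.preimage_isClosed_of_isClosed isClosed_Icc isClosed_singleton).csSup_mem
      ⟨x₀, hx₀, hfx₀⟩ hKbdd
  set w := sSup K
  obtain ⟨⟨huw, hwv⟩, hfw : f w = c⟩ := hwK
  -- `w` is the last crossing of the level `c`, and `f v > c`
  have habove : ∀ x ∈ Ioc w v, c < f x := by
    intro x hx
    by_contra! hle
    obtain ⟨x', hx', hfx'⟩ := intermediate_value_Icc hx.2
      (hcont.mono (Icc_subset_Icc (huw.trans hx.1.le) le_rfl)) ⟨hle, hc.2.le⟩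
    have : x' ≤ w := le_csSup hKbdd ⟨⟨huw.trans (hx.1.le.trans hx'.1), hx'.2⟩, hfx'⟩
    linarith [hx.1, hx'.1]
  have hwv' : w < v := hwv.lt_of_ne fun h => hc.2.ne (h ▸ hfw).symm
  have hmin : IsMinOn f (Icc w v) w := isMinOn_iff.2 fun x hx => by
    rcases hx.1.eq_or_lt with hwx | hwx
    · rw [hwx]
    · exact hfw ▸ (habove x ⟨hwx, hx.2⟩).le
  exact ⟨w, ⟨⟨huw, hwv'⟩, (hf w ⟨huw, hwv'⟩).nonneg_of_isMinOn_Icc hwv' hmin⟩, hfw⟩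

theorem antitoneOn_of_hasDerivWithinAt_of_ae_nonpos {f f' : ℝ → ℝ} {s : Set ℝ}
    (hs : s.OrdConnected) (hf : ∀ x ∈ s, HasDerivWithinAt f (f' x) s x)
    (hf' : ∀ᵐ x ∂volume.restrict s, f' x ≤ 0) : AntitoneOn f s := by
  intro u hu v hv huv
  by_contra! hlt
  have hsub : Icc u v ⊆ s := hs.out hu hv
  have hcover : Ioo (f u) (f v) ⊆ f '' {x ∈ s | f' x = 0} ∪ f '' {x ∈ s | 0 < f' x} := by
    rw [← image_union]
    refine (Ioo_subset_image_setOf_deriv_nonneg huv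
      (fun x hx => (hf x (hsub hx)).continuousWithinAt.mono hsub)
      (fun x hx => (hf x (hsub (Ico_subset_Icc_self hx))).mono
        ((Icc_subset_Icc_left hx.1).trans hsub))).trans (image_mono ?_)
    rintro x ⟨hx, hx0⟩
    exact hx0.eq_or_lt.imp (fun h => ⟨hsub (Ico_subset_Icc_self hx), h.symm⟩)
      (fun h => ⟨hsub (Ico_subset_Icc_self hx), h⟩)
  have hzero : volume (f '' {x ∈ s | f' x = 0}) = 0 :=
    volume_image_eq_zero_of_hasDerivWithinAt_zero fun x hx =>
      hx.2 ▸ (hf x hx.1).mono (sep_subset _ _)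
  have hpos_null : volume {x ∈ s | 0 < f' x} = 0 := by
    rw [ae_restrict_iff' hs.measurableSet, ae_iff] at hf'
    simpa only [Classical.not_imp, not_le] using hf'
  have hpos : volume (f '' {x ∈ s | 0 < f' x}) = 0 :=
    addHaar_image_eq_zero_of_differentiableOn_of_addHaar_eq_zero volume
      (fun x hx => ((hf x hx.1).mono (sep_subset _ _)).differentiableWithinAt) hpos_null
  have := measure_mono_null hcover (measure_union_null hzero hpos)
  rw [Real.volume_Ioo, ENNReal.ofReal_eq_zero] at this
  linarith

theorem ContinuousOn.exists_first_ge {f : ℝ → ℝ} {a b c : ℝ} (hf : ContinuousOn f (Icc a b))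
    (ha : f a < c) (hc : ∃ t ∈ Icc a b, c ≤ f t) :
    ∃ t ∈ Ioc a b, c ≤ f t ∧ ∀ s ∈ Ico a t, f s < c := by
  obtain ⟨t, ht, hct⟩ := hc
  set W := Icc a b ∩ f ⁻¹' Ici c
  have hWbdd : BddBelow W := ⟨a, fun x hx => hx.1.1⟩
  obtain ⟨⟨hat₁, ht₁b⟩, hct₁⟩ : sInf W ∈ W :=
    (hf.preimage_isClosed_of_isClosed isClosed_Icc isClosed_Ici).csInf_mem ⟨t, ht, hct⟩ hWbdd
  refine ⟨sInf W, ⟨hat₁.lt_of_ne fun h => (h ▸ ha).not_ge hct₁, ht₁b⟩, hct₁, fun s hs => ?_⟩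
  by_contra! hcs
  exact (csInf_le hWbdd ⟨⟨hs.1, hs.2.le.trans ht₁b⟩, hcs⟩).not_gt hs.2

theorem antitoneOn_Icc_of_deriv_add_mul_sub_nonpos {y y' z : ℝ → ℝ} {a b c : ℝ}
    (hz : ∀ t ∈ Ico a b, 0 ≤ z t) (hy : ∀ t ∈ Ico a b, y t < c)
    (hderiv : ∀ t ∈ Icc a b, HasDerivWithinAt y (y' t) (Icc a b) t)
    (hineq : ∀ᵐ t ∂volume.restrict (Icc a b), y' t + z t * (c - y t) ≤ 0) :
    AntitoneOn y (Icc a b) := by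
  refine antitoneOn_of_hasDerivWithinAt_of_ae_nonpos ordConnected_Icc hderiv ?_
  rw [← Measure.restrict_congr_set Ico_ae_eq_Icc] at hineq ⊢
  filter_upwards [hineq, ae_restrict_mem measurableSet_Ico] with t ht hts
  nlinarith [hz t hts, hy t hts]

theorem differential_inequality_stays_small_general (y y' z : ℝ → ℝ) (t0 T κ : ℝ)
    (hκ : 0 < κ)
    (hz_nonneg : ∀ t ∈ Set.Icc t0 T, 0 ≤ z t)
    (hderiv : ∀ t ∈ Set.Icc t0 T, HasDerivWithinAt y (y' t) (Set.Icc t0 T) t)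
    (hy0 : y t0 ≤ κ / 4)
    (hineq : ∀ᵐ t ∂(volume.restrict (Set.Icc t0 T)),
      y' t + z t * (κ / 2 - y t) ≤ 0) :
    (∀ t ∈ Set.Icc t0 T, y t ≤ κ / 4) ∧ AntitoneOn y (Set.Icc t0 T) := by
  have hbelow : ∀ t ∈ Icc t0 T, y t < κ / 2 := by
    by_contra! h
    obtain ⟨t₁, ht₁, hyt₁, hlt⟩ :=
      ContinuousOn.exists_first_ge (fun t ht => (hderiv t ht).continuousWithinAt) (by linarith) h
    have hsub : Icc t0 t₁ ⊆ Icc t0 T := Icc_subset_Icc_right ht₁.2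
    have hanti : AntitoneOn y (Icc t0 t₁) :=
      antitoneOn_Icc_of_deriv_add_mul_sub_nonpos
        (fun t ht => hz_nonneg t (hsub (Ico_subset_Icc_self ht))) hlt
        (fun t ht => (hderiv t (hsub ht)).mono hsub)
        (ae_restrict_of_ae_restrict_of_subset hsub hineq)
    linarith [hanti (left_mem_Icc.2 ht₁.1.le) (right_mem_Icc.2 ht₁.1.le) ht₁.1.le]
  have hanti : AntitoneOn y (Icc t0 T) :=
    antitoneOn_Icc_of_deriv_add_mul_sub_nonpos (fun t ht => hz_nonneg t (Ico_subset_Icc_self ht))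
      (fun t ht => hbelow t (Ico_subset_Icc_self ht)) hderiv hineq
  exact ⟨fun t ht => (hanti (left_mem_Icc.2 (ht.1.trans ht.2)) ht ht.1).trans hy0, hanti⟩

/-- If nonnegative continuous `y, z` on `[t0, T]` satisfy `y(t0) ≤ κ/4` and
`y'(t) + z(t)(κ/2 - y(t)) ≤ 0` a.e., then `y(t) ≤ κ/4` on `[t0, T]` and `y`
is non-increasing there. -/
theorem differential_inequality_stays_small (y y' z : ℝ → ℝ) (t0 T κ : ℝ)
    (hκ : 0 < κ) (hT : t0 ≤ T)
    (hy_cont : ContinuousOn y (Set.Icc t0 T))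
    (hz_cont : ContinuousOn z (Set.Icc t0 T))
    (hy_nonneg : ∀ t ∈ Set.Icc t0 T, 0 ≤ y t)
    (hz_nonneg : ∀ t ∈ Set.Icc t0 T, 0 ≤ z t)
    (hderiv : ∀ t ∈ Set.Icc t0 T, HasDerivWithinAt y (y' t) (Set.Icc t0 T) t)
    (hy0 : y t0 ≤ κ / 4)
    (hineq : ∀ᵐ t ∂(volume.restrict (Set.Icc t0 T)),
      y' t + z t * (κ / 2 - y t) ≤ 0) :
    (∀ t ∈ Set.Icc t0 T, y t ≤ κ / 4) ∧ AntitoneOn y (Set.Icc t0 T) :=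
  differential_inequality_stays_small_general y y' z t0 T κ hκ hz_nonneg hderiv hy0 hineq
end
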